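/- Let α_1, β_1, α_2, β_2 > 0, let g(α_1,β_1,α_2,β_2) = ∫_0^1 f(x;α_1,β_1) I_x(α_2,β_2) dx and h(α_1,β_1,α_2,β_2) = B(α_1+α_2, β_1+β_2)/(B(α_1,β_1) B(α_2,β_2)). Then g(α_1+1, β_1, α_2, β_2) = g(α_1,β_1,α_2,β_2) + h(α_1,β_1,α_2,β_2)/α_1. -/

import Mathlib

open MeasureTheory Real Set

/-- The Beta function `B(a,b) = ∫₀¹ t^(a-1) (1-t)^(b-1) dt`. -/
noncomputable def betaFn (a b : ℝ) : ℝ :=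
  ∫ t in (0:ℝ)..1, t ^ (a - 1) * (1 - t) ^ (b - 1)

/-- The Beta(a,b) probability density on `[0,1]`. -/
noncomputable def betaPdf (a b : ℝ) (x : ℝ) : ℝ :=
  x ^ (a - 1) * (1 - x) ^ (b - 1) / betaFn a b

/-- The cumulative distribution function of Beta(a,b). -/
noncomputable def betaCdf (a b : ℝ) (x : ℝ) : ℝ :=
  (∫ t in (0:ℝ)..x, t ^ (a - 1) * (1 - t) ^ (b - 1)) / betaFn a b

/-- `g(α₁,β₁,α₂,β₂)`: the probability that an independent Beta(α₁,β₁) sample exceeds an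
independent Beta(α₂,β₂) sample. -/
noncomputable def probG (a₁ b₁ a₂ b₂ : ℝ) : ℝ :=
  ∫ x in (0:ℝ)..1, betaPdf a₁ b₁ x * betaCdf a₂ b₂ x

/-- `h(α₁,β₁,α₂,β₂) = B(α₁+α₂,β₁+β₂)/(B(α₁,β₁) B(α₂,β₂))`. -/
noncomputable def probH (a₁ b₁ a₂ b₂ : ℝ) : ℝ :=
  betaFn (a₁ + a₂) (b₁ + b₂) / (betaFn a₁ b₁ * betaFn a₂ b₂)

/-!
Write `u(x) = x^a₁ (1-x)^b₁`. The recurrence `(a + b) B(a+1, b) = a B(a, b)` turns the difference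
of densities `f(·; a₁+1, b₁) - f(·; a₁, b₁)` into `-u' / (a₁ B(a₁, b₁))`. Integrating by parts
against `I_x(a₂, b₂)`, whose derivative is `f(·; a₂, b₂)`, and using `u(0) = u(1) = 0`, the
difference `g(a₁+1, ·) - g(a₁, ·)` becomes `∫ u f(·; a₂, b₂) / (a₁ B(a₁, b₁)) = h / a₁`.
The Beta recurrence itself is the same integration by parts, against the constant `1`.
-/

section RpowMulOneSubRpow

variable {p q : ℝ}

lemma intervalIntegrable_rpow_mul_one_sub_rpow_zero_half (hp : -1 < p) :
    IntervalIntegrable (fun x : ℝ => x ^ p * (1 - x) ^ q) volume 0 (1 / 2) := by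
  refine (intervalIntegral.intervalIntegrable_rpow' hp).mul_continuousOn fun x hx => ?_
  rw [uIcc_of_le (by norm_num)] at hx
  have hx₁ : (1 : ℝ) - x ≠ 0 := by linarith [hx.2]
  exact ((continuousAt_const.sub continuousAt_id).rpow_const (Or.inl hx₁)).continuousWithinAt

lemma intervalIntegrable_rpow_mul_one_sub_rpow (hp : -1 < p) (hq : -1 < q) :
    IntervalIntegrable (fun x : ℝ => x ^ p * (1 - x) ^ q) volume 0 1 := by
  have hright : IntervalIntegrable (fun x : ℝ => x ^ p * (1 - x) ^ q) volume (1 / 2) 1 := by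
    have h := (intervalIntegrable_rpow_mul_one_sub_rpow_zero_half (q := p) hq).comp_sub_left 1
    rw [sub_zero, show (1 : ℝ) - 1 / 2 = 1 / 2 by norm_num] at h
    simpa only [sub_sub_cancel, mul_comm] using h.symm
  exact (intervalIntegrable_rpow_mul_one_sub_rpow_zero_half hp).trans hright

/-- The derivative is written so that both terms are Beta integrands. -/
lemma hasDerivAt_rpow_mul_one_sub_rpow {x : ℝ} (hx : x ∈ Ioo (0 : ℝ) 1) :
    HasDerivAt (fun x : ℝ => x ^ p * (1 - x) ^ q)
      (p * (x ^ (p - 1) * (1 - x) ^ (q - 1)) - (p + q) * (x ^ p * (1 - x) ^ (q - 1))) x := by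
  have hx₀ : 0 < x := hx.1
  have hx₁ : 0 < 1 - x := sub_pos.2 hx.2
  have h : HasDerivAt (fun x : ℝ => x ^ p * (1 - x) ^ q)
      (p * x ^ (p - 1) * (1 - x) ^ q + x ^ p * (-1 * q * (1 - x) ^ (q - 1))) x :=
    (hasDerivAt_rpow_const (Or.inl hx₀.ne')).mul
      (((hasDerivAt_id x).const_sub 1).rpow_const (Or.inl hx₁.ne'))
  refine h.congr_deriv ?_
  rw [← sub_add_cancel p 1, rpow_add_one hx₀.ne', ← sub_add_cancel q 1, rpow_add_one hx₁.ne']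
  simp only [sub_add_cancel]
  ring

lemma integral_deriv_rpow_mul_one_sub_rpow_mul (hp : 0 < p) (hq : 0 < q)
    {v v' : ℝ → ℝ} (hv : ContinuousOn v (Icc 0 1))
    (hvv' : ∀ x ∈ Ioo (0 : ℝ) 1, HasDerivAt v (v' x) x) (hv' : IntervalIntegrable v' volume 0 1) :
    ∫ x in (0 : ℝ)..1,
        (p * (x ^ (p - 1) * (1 - x) ^ (q - 1)) - (p + q) * (x ^ p * (1 - x) ^ (q - 1))) * v x
      = -∫ x in (0 : ℝ)..1, x ^ p * (1 - x) ^ q * v' x := by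
  have hu : Continuous fun x : ℝ => x ^ p * (1 - x) ^ q :=
    (continuous_rpow_const hp.le).mul
      ((continuous_rpow_const hq.le).comp (continuous_const.sub continuous_id))
  have hu' := ((intervalIntegrable_rpow_mul_one_sub_rpow (p := p - 1) (q := q - 1)
    (by linarith) (by linarith)).const_mul p).sub
    ((intervalIntegrable_rpow_mul_one_sub_rpow (p := p) (q := q - 1)
    (by linarith) (by linarith)).const_mul (p + q))
  rw [intervalIntegral.integral_mul_deriv_eq_deriv_mul_of_hasDerivAt hu.continuousOn
    (by rwa [uIcc_of_le zero_le_one])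
    (by simpa using fun x hx => hasDerivAt_rpow_mul_one_sub_rpow hx)
    (by simpa using hvv') hu' hv']
  simp [zero_rpow hp.ne', zero_rpow hq.ne']

end RpowMulOneSubRpow

lemma betaFn_pos {a b : ℝ} (ha : 0 < a) (hb : 0 < b) : 0 < betaFn a b :=
  intervalIntegral.intervalIntegral_pos_of_pos_on
    (intervalIntegrable_rpow_mul_one_sub_rpow (by linarith) (by linarith))
    (fun x hx => mul_pos (rpow_pos_of_pos hx.1 _) (rpow_pos_of_pos (sub_pos.2 hx.2) _))
    zero_lt_one

lemma betaFn_add_one_left {a b : ℝ} (ha : 0 < a) (hb : 0 < b) :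
    (a + b) * betaFn (a + 1) b = a * betaFn a b := by
  have h := integral_deriv_rpow_mul_one_sub_rpow_mul ha hb (v := fun _ => 1) (v' := fun _ => 0)
    continuousOn_const (fun x _ => hasDerivAt_const x 1) intervalIntegrable_const
  simp only [mul_one, mul_zero, intervalIntegral.integral_zero, neg_zero] at h
  rw [intervalIntegral.integral_sub
    ((intervalIntegrable_rpow_mul_one_sub_rpow (by linarith) (by linarith)).const_mul _)
    ((intervalIntegrable_rpow_mul_one_sub_rpow (by linarith) (by linarith)).const_mul _),
    intervalIntegral.integral_const_mul, intervalIntegral.integral_const_mul, sub_eq_zero] at h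
  simp only [betaFn, add_sub_cancel_right]
  linarith

lemma betaPdf_add_one_left_sub_betaPdf {a b : ℝ} (ha : 0 < a) (hb : 0 < b) (x : ℝ) :
    betaPdf (a + 1) b x - betaPdf a b x
      = -(a * (x ^ (a - 1) * (1 - x) ^ (b - 1)) - (a + b) * (x ^ a * (1 - x) ^ (b - 1)))
        / (a * betaFn a b) := by
  have hB := betaFn_pos ha hb
  have hrec : betaFn (a + 1) b = a * betaFn a b / (a + b) := by
    rw [eq_div_iff (by positivity), mul_comm, betaFn_add_one_left ha hb]
  rw [betaPdf, betaPdf, add_sub_cancel_right, hrec]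
  field_simp
  ring

lemma intervalIntegrable_betaPdf {a b : ℝ} (ha : 0 < a) (hb : 0 < b) :
    IntervalIntegrable (betaPdf a b) volume 0 1 :=
  (intervalIntegrable_rpow_mul_one_sub_rpow (by linarith) (by linarith)).div_const _

lemma continuousOn_betaCdf {a b : ℝ} (ha : 0 < a) (hb : 0 < b) :
    ContinuousOn (betaCdf a b) (Icc 0 1) := by
  have h := intervalIntegral.continuousOn_primitive_interval'
    (intervalIntegrable_rpow_mul_one_sub_rpow (p := a - 1) (q := b - 1)
      (by linarith) (by linarith)) left_mem_uIcc
  rw [uIcc_of_le zero_le_one] at h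
  exact h.div_const _

lemma hasDerivAt_betaCdf {a b x : ℝ} (ha : 0 < a) (hb : 0 < b) (hx : x ∈ Ioo (0 : ℝ) 1) :
    HasDerivAt (betaCdf a b) (betaPdf a b x) x := by
  have hcont : ∀ y ∈ Ioo (0 : ℝ) 1, ContinuousAt (fun t => t ^ (a - 1) * (1 - t) ^ (b - 1)) y :=
    fun y hy => (hasDerivAt_rpow_mul_one_sub_rpow hy).continuousAt
  refine HasDerivAt.div_const (intervalIntegral.integral_hasDerivAt_right
    ((intervalIntegrable_rpow_mul_one_sub_rpow (by linarith) (by linarith)).mono_set ?_)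
    (ContinuousAt.stronglyMeasurableAtFilter isOpen_Ioo hcont x hx) (hcont x hx)) _
  rw [uIcc_of_le hx.1.le, uIcc_of_le zero_le_one]
  exact Icc_subset_Icc_right hx.2.le

lemma integral_rpow_mul_one_sub_rpow_mul_betaPdf (a b a₂ b₂ : ℝ) :
    ∫ x in (0 : ℝ)..1, x ^ a * (1 - x) ^ b * betaPdf a₂ b₂ x
      = betaFn (a + a₂) (b + b₂) / betaFn a₂ b₂ := by
  rw [betaFn, ← intervalIntegral.integral_div]
  refine intervalIntegral.integral_congr_Ioo_of_le zero_le_one fun x hx => ?_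
  rw [betaPdf, add_sub_assoc, rpow_add hx.1, add_sub_assoc, rpow_add (sub_pos.2 hx.2)]
  ring

/-- Recurrence: incrementing α₁ by one. -/
theorem probG_alpha1_succ (a₁ b₁ a₂ b₂ : ℝ)
    (hα₁ : 0 < a₁) (hβ₁ : 0 < b₁) (hα₂ : 0 < a₂) (hβ₂ : 0 < b₂) :
    probG (a₁ + 1) b₁ a₂ b₂ = probG a₁ b₁ a₂ b₂ + probH a₁ b₁ a₂ b₂ / a₁ := by
  have hcdf := continuousOn_betaCdf hα₂ hβ₂
  have hint : ∀ a b, 0 < a → 0 < b →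
      IntervalIntegrable (fun x => betaPdf a b x * betaCdf a₂ b₂ x) volume 0 1 :=
    fun a b ha hb => (intervalIntegrable_betaPdf ha hb).mul_continuousOn
      (by rwa [uIcc_of_le zero_le_one])
  have hdiff : probG (a₁ + 1) b₁ a₂ b₂ - probG a₁ b₁ a₂ b₂
      = -(∫ x in (0 : ℝ)..1, (a₁ * (x ^ (a₁ - 1) * (1 - x) ^ (b₁ - 1))
          - (a₁ + b₁) * (x ^ a₁ * (1 - x) ^ (b₁ - 1))) * betaCdf a₂ b₂ x)
        / (a₁ * betaFn a₁ b₁) := by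
    rw [probG, probG,
      ← intervalIntegral.integral_sub (hint _ _ (by linarith) hβ₁) (hint _ _ hα₁ hβ₁)]
    simp_rw [← sub_mul, betaPdf_add_one_left_sub_betaPdf hα₁ hβ₁]
    rw [← intervalIntegral.integral_neg, ← intervalIntegral.integral_div]
    congr 1 with x
    ring
  rw [integral_deriv_rpow_mul_one_sub_rpow_mul hα₁ hβ₁ hcdf
    (fun x hx => hasDerivAt_betaCdf hα₂ hβ₂ hx) (intervalIntegrable_betaPdf hα₂ hβ₂),
    integral_rpow_mul_one_sub_rpow_mul_betaPdf] at hdiff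
  rw [probH, ← sub_eq_iff_eq_add', hdiff]
  field_simp
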